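/- Let ℓ : ℕ → ℕ be strictly increasing with ∑_n 2^{-(ℓ(n+1) − ℓ(n))} < ∞, and let P ⊆ 2^ω be a closed set with μ(P) > 0. Then there exists a nonempty pruned tree T that is ℓ-perfect and satisfies [T] ⊆ P. -/

import Mathlib

open scoped ENNReal

/-- The length-`n` prefix of a point of Cantor space `2^ω = ℕ → Bool`, as a binary string. -/
def pre (x : ℕ → Bool) (n : ℕ) : List Bool := (List.range n).map x

/-- `σ` is a (finite) prefix of `x ∈ 2^ω`. -/
def PrefOf (σ : List Bool) (x : ℕ → Bool) : Prop := pre x σ.length = σ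

/-- The cylinder `[σ] = {x ∈ 2^ω : σ ⪯ x}`. -/
def cyl (σ : List Bool) : Set (ℕ → Bool) := {x | PrefOf σ x}

/-- `[V] = ⋃_{σ ∈ V} [σ]`. -/
def cylSet (V : Set (List Bool)) : Set (ℕ → Bool) := ⋃ σ ∈ V, cyl σ

/-- A tree: a set of binary strings closed under prefixes. -/
def IsTree (T : Set (List Bool)) : Prop := ∀ σ ∈ T, ∀ τ : List Bool, τ <+: σ → τ ∈ T

/-- A pruned tree: every node has a proper extension in the tree. -/
def Pruned (T : Set (List Bool)) : Prop := ∀ σ ∈ T, ∃ τ ∈ T, σ <+: τ ∧ σ ≠ τ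

/-- The set `[T]` of paths of a tree `T`. -/
def paths (T : Set (List Bool)) : Set (ℕ → Bool) := {x | ∀ n, pre x n ∈ T}

/-- The fair-coin (uniform) product measure on Cantor space, characterized by its
values `μ [σ] = 2^{-|σ|}` on cylinders (this determines `μ` uniquely). -/
def IsFairCoin (μ : MeasureTheory.Measure (ℕ → Bool)) : Prop :=
  ∀ σ : List Bool, μ (cyl σ) = 2⁻¹ ^ σ.length

/-- `σ` has at least two extensions of length `L` in `T`. -/
def TwoExt (T : Set (List Bool)) (σ : List Bool) (L : ℕ) : Prop :=
  ∃ τ₁ ∈ T, ∃ τ₂ ∈ T,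
    σ <+: τ₁ ∧ σ <+: τ₂ ∧ τ₁.length = L ∧ τ₂.length = L ∧ τ₁ ≠ τ₂

/-- `T` is `ℓ`-perfect: for all but finitely many `n`, every node of `T` of length `ℓ n`
has at least two extensions in `T` of length `ℓ (n+1)`. -/
def EllPerfect (ℓ : ℕ → ℕ) (T : Set (List Bool)) : Prop :=
  ∀ᶠ n in Filter.atTop, ∀ σ ∈ T, σ.length = ℓ n → TwoExt T σ (ℓ (n + 1))

/-!
Put `ε n = δ + 2 ∑_{k ≥ n} 2^{-(ℓ(k+1) - ℓ k)}` with `0 < δ < μ P`, so that `ε` drops by exactly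
`2 · 2^{-(ℓ(n+1) - ℓ n)}` from level `n` to level `n + 1`, and `ε N < μ P` for large `N`. Call a
string of length `ℓ m` (`m ≥ N`) heavy if each of its prefixes of length `ℓ n` (`N ≤ n ≤ m`) has
`P`-mass at least `θ n = ε n 2^{-ℓ n}`. The light extensions of length `ℓ (m+1)` of a heavy `σ`
carry less than `ε (m+1) 2^{-ℓ m}` and a single extension at most `2^{-ℓ (m+1)}`, whereas
`σ` carries at least `ε (m+1) 2^{-ℓ m} + 2 · 2^{-ℓ (m+1)}`; hence `σ` has two heavy extensions.
The prefixes of heavy strings form the tree, and every path has arbitrarily long prefixes whose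
cylinders meet `P`, so it lies in the closed set `P`.
-/

open MeasureTheory Filter

lemma exists_eq_add_succ_of_tsum_ne_top {d : ℕ → ℝ≥0∞} (hd : ∑' n, d n ≠ ⊤) {a : ℝ≥0∞}
    (ha : 0 < a) : ∃ ε : ℕ → ℝ≥0∞, (∀ n, 0 < ε n ∧ ε n ≠ ⊤) ∧ (∀ n, ε n = d n + ε (n + 1)) ∧
      ∀ᶠ n in atTop, ε n < a := by
  obtain ⟨δ, hδ0, hδa⟩ := exists_between ha
  have htail : ∀ n, ∑' k, d (k + n) = d n + ∑' k, d (k + (n + 1)) := fun n => by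
    rw [tsum_eq_zero_add' ENNReal.summable]
    simp only [zero_add, add_right_comm _ 1 n, add_assoc]
  refine ⟨fun n => δ + ∑' k, d (k + n), fun n => ⟨hδ0.trans_le le_self_add, ?_⟩,
    fun n => by simp only [htail n]; ring, ?_⟩
  · exact ENNReal.add_ne_top.2 ⟨hδa.ne_top, ne_top_of_le_ne_top hd
      (ENNReal.tsum_comp_le_tsum_of_injective (add_left_injective n) d)⟩
  · have h := tendsto_const_nhds (x := δ) |>.add (ENNReal.tendsto_sum_nat_add d hd)
    rw [add_zero] at h
    exact h.eventually_lt_const hδa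

lemma two_pow_mul_inv_two_pow (a : ℕ) : (2 : ℝ≥0∞) ^ a * 2⁻¹ ^ a = 1 := by
  rw [← mul_pow, ENNReal.mul_inv_cancel two_ne_zero ENNReal.ofNat_ne_top, one_pow]

lemma two_pow_mul_add_lt {e : ℝ≥0∞} (he : e ≠ ⊤) (a k : ℕ) :
    2 ^ k * (e * 2⁻¹ ^ (a + k)) + 2⁻¹ ^ (a + k) < (2 * 2⁻¹ ^ k + e) * 2⁻¹ ^ a := by
  have hscale : 2 ^ k * (e * 2⁻¹ ^ (a + k)) = e * 2⁻¹ ^ a := by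
    rw [pow_add, mul_left_comm, mul_left_comm (2 ^ k), two_pow_mul_inv_two_pow, mul_one]
  have hdouble : 2 * 2⁻¹ ^ k * 2⁻¹ ^ a = 2⁻¹ ^ (a + k) + (2⁻¹ : ℝ≥0∞) ^ (a + k) := by ring
  rw [hscale, add_mul, hdouble, add_comm (_ + _)]
  exact ENNReal.add_lt_add_left (ENNReal.mul_ne_top he (ENNReal.pow_ne_top (by simp)))
    (ENNReal.lt_add_right (ENNReal.pow_ne_top (by simp)) (by simp))

lemma length_pre (x : ℕ → Bool) (n : ℕ) : (pre x n).length = n := by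
  simp [pre]

lemma pre_add (x : ℕ → Bool) (a k : ℕ) :
    pre x (a + k) = pre x a ++ List.ofFn (fun i : Fin k => x (a + i)) := by
  rw [pre, List.range_add, List.map_append, List.map_map]
  congr 1
  apply List.ext_getElem <;> simp

lemma mem_cyl {σ : List Bool} {x : ℕ → Bool} : x ∈ cyl σ ↔ pre x σ.length = σ := Iff.rfl

lemma cyl_nil : cyl [] = Set.univ := by
  ext x
  simp [mem_cyl, pre]

lemma apply_eq_of_pre_eq {x y : ℕ → Bool} {n i : ℕ} (h : pre y n = pre x n) (hi : i < n) :
    y i = x i := by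
  simpa [pre, hi] using congrArg (·[i]?) h

lemma cyl_subset_iUnion_cyl_append (σ : List Bool) (k : ℕ) :
    cyl σ ⊆ ⋃ f : Fin k → Bool, cyl (σ ++ List.ofFn f) := by
  intro x hx
  refine Set.mem_iUnion.2 ⟨fun i => x (σ.length + i), ?_⟩
  rw [mem_cyl] at hx ⊢
  simp only [List.length_append, List.length_ofFn, pre_add, hx]

lemma IsClosed.mem_of_frequently_nonempty {P : Set (ℕ → Bool)} (hP : IsClosed P)
    {x : ℕ → Bool} (h : ∃ᶠ n in atTop, (P ∩ cyl (pre x n)).Nonempty) : x ∈ P := by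
  choose k hk y hy using frequently_atTop.1 h
  have hpre : ∀ n, pre (y n) (k n) = pre x (k n) := fun n => by
    simpa only [mem_cyl, length_pre] using (hy n).2
  refine hP.mem_of_tendsto (b := atTop) (tendsto_pi_nhds.2 fun i => ?_)
    (.of_forall fun n => (hy n).1)
  refine tendsto_nhds_of_eventually_eq (eventually_atTop.2 ⟨i + 1, fun n hn => ?_⟩)
  exact apply_eq_of_pre_eq (hpre n) (by linarith [hk n])

section Measure

variable {μ : Measure (ℕ → Bool)}

lemma measure_inter_cyl_le_sum (A : Set (ℕ → Bool)) (σ : List Bool) (k : ℕ) :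
    μ (A ∩ cyl σ) ≤ ∑ f : Fin k → Bool, μ (A ∩ cyl (σ ++ List.ofFn f)) := by
  refine (measure_mono ?_).trans (measure_iUnion_fintype_le μ _)
  rw [← Set.inter_iUnion]
  exact Set.inter_subset_inter_right A (cyl_subset_iUnion_cyl_append σ k)

lemma exists_le_measure_inter_cyl_append {A : Set (ℕ → Bool)} {σ : List Bool} {k : ℕ}
    {c : ℝ≥0∞} (h : 2 ^ k * c < μ (A ∩ cyl σ)) :
    ∃ f : Fin k → Bool, c ≤ μ (A ∩ cyl (σ ++ List.ofFn f)) := by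
  by_contra! hlt
  refine h.not_ge ((measure_inter_cyl_le_sum A σ k).trans ?_)
  calc ∑ f : Fin k → Bool, μ (A ∩ cyl (σ ++ List.ofFn f))
      ≤ Finset.univ.card • c := Finset.sum_le_card_nsmul _ _ _ fun f _ => (hlt f).le
    _ = 2 ^ k * c := by simp [nsmul_eq_mul]

/-- Removing the cylinder of the first extension found costs at most `μ [τ₁] = 2^{-(|σ| + k)}`,
so the extra term in the hypothesis leaves room for a second one. -/
lemma exists_two_le_measure_inter_cyl_append (hμ : IsFairCoin μ) {A : Set (ℕ → Bool)}
    {σ : List Bool} {k : ℕ} {c : ℝ≥0∞} (hc : 0 < c)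
    (h : 2 ^ k * c + 2⁻¹ ^ (σ.length + k) < μ (A ∩ cyl σ)) :
    ∃ f g : Fin k → Bool, f ≠ g ∧ c ≤ μ (A ∩ cyl (σ ++ List.ofFn f)) ∧
      c ≤ μ (A ∩ cyl (σ ++ List.ofFn g)) := by
  obtain ⟨f, hf⟩ := exists_le_measure_inter_cyl_append (lt_of_le_of_lt le_self_add h)
  set τ := σ ++ List.ofFn f
  have hsplit : μ (A ∩ cyl σ) ≤ μ ((A \ cyl τ) ∩ cyl σ) + 2⁻¹ ^ (σ.length + k) := by
    rw [← List.length_ofFn (f := f), ← List.length_append, ← hμ τ]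
    refine (measure_mono fun x hx => ?_).trans (measure_union_le _ _)
    by_cases hxτ : x ∈ cyl τ
    exacts [Or.inr hxτ, Or.inl ⟨⟨hx.1, hxτ⟩, hx.2⟩]
  obtain ⟨g, hg⟩ :=
    exists_le_measure_inter_cyl_append (lt_of_add_lt_add_right (h.trans_le hsplit))
  refine ⟨f, g, ?_, hf, hg.trans (measure_mono (Set.inter_subset_inter_left _ Set.sdiff_subset))⟩
  rintro rfl
  rw [Set.sdiff_inter_self, measure_empty] at hg
  exact hc.not_ge hg

end Measure

section Heavy

variable {μ : Measure (ℕ → Bool)} {P : Set (ℕ → Bool)} {ℓ : ℕ → ℕ} {θ : ℕ → ℝ≥0∞} {N : ℕ}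
  {σ τ : List Bool} {m n : ℕ}

def heavyNodes (μ : Measure (ℕ → Bool)) (P : Set (ℕ → Bool)) (ℓ : ℕ → ℕ) (θ : ℕ → ℝ≥0∞)
    (N : ℕ) : Set (List Bool) :=
  {σ | (∃ m, N ≤ m ∧ σ.length = ℓ m) ∧
    ∀ n, N ≤ n → ℓ n ≤ σ.length → θ n ≤ μ (P ∩ cyl (σ.take (ℓ n)))}

lemma mem_heavyNodes_of_prefix (hσ : σ ∈ heavyNodes μ P ℓ θ N) (hτσ : τ <+: σ) (hn : N ≤ n)
    (hτ : τ.length = ℓ n) : τ ∈ heavyNodes μ P ℓ θ N := by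
  refine ⟨⟨n, hn, hτ⟩, fun n' hn' hle => ?_⟩
  obtain ⟨ρ, rfl⟩ := hτσ
  rw [← List.take_append_of_le_length hle]
  exact hσ.2 n' hn' (hle.trans (List.length_append .. ▸ Nat.le_add_right _ _))

lemma measure_le_of_mem_heavyNodes (hσ : σ ∈ heavyNodes μ P ℓ θ N) (hm : N ≤ m)
    (hlen : σ.length = ℓ m) : θ m ≤ μ (P ∩ cyl σ) := by
  simpa [← hlen] using hσ.2 m hm hlen.ge

lemma append_mem_heavyNodes (hℓ : StrictMono ℓ) (hσ : σ ∈ heavyNodes μ P ℓ θ N) (hm : N ≤ m)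
    (hlen : σ.length = ℓ m) {ρ : List Bool} (hρ : (σ ++ ρ).length = ℓ (m + 1))
    (hθ : θ (m + 1) ≤ μ (P ∩ cyl (σ ++ ρ))) : σ ++ ρ ∈ heavyNodes μ P ℓ θ N := by
  refine ⟨⟨m + 1, by omega, hρ⟩, fun n hn hle => ?_⟩
  rcases (hℓ.le_iff_le.1 (hle.trans_eq hρ)).lt_or_eq with hlt | rfl
  · have hle' : ℓ n ≤ σ.length := hlen ▸ hℓ.monotone (Nat.lt_succ_iff.1 hlt)
    rw [List.take_append_of_le_length hle']
    exact hσ.2 n hn hle'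
  · rwa [List.take_of_length_le hρ.le]

lemma exists_mem_heavyNodes (hℓ : StrictMono ℓ) (hN : 2 ^ ℓ N * θ N < μ P) :
    ∃ σ, σ ∈ heavyNodes μ P ℓ θ N := by
  obtain ⟨f, hf⟩ := exists_le_measure_inter_cyl_append (A := P) (σ := [])
    (by rwa [cyl_nil, Set.inter_univ])
  have hlen : ([] ++ List.ofFn f).length = ℓ N := by simp
  refine ⟨_, ⟨N, le_rfl, hlen⟩, fun n hn hle => ?_⟩
  obtain rfl := le_antisymm (hℓ.le_iff_le.1 (hle.trans_eq hlen)) hn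
  rwa [List.take_of_length_le hlen.le]

lemma twoExt_heavyNodes (hμ : IsFairCoin μ) (hℓ : StrictMono ℓ) (hθ : ∀ n, 0 < θ n)
    (hstep : ∀ n, 2 ^ (ℓ (n + 1) - ℓ n) * θ (n + 1) + 2⁻¹ ^ ℓ (n + 1) < θ n)
    (hσ : σ ∈ heavyNodes μ P ℓ θ N) (hm : N ≤ m) (hlen : σ.length = ℓ m) :
    TwoExt (heavyNodes μ P ℓ θ N) σ (ℓ (m + 1)) := by
  have hk : σ.length + (ℓ (m + 1) - ℓ m) = ℓ (m + 1) := by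
    rw [hlen]; exact Nat.add_sub_cancel' (hℓ m.lt_succ_self).le
  have hmass : 2 ^ (ℓ (m + 1) - ℓ m) * θ (m + 1) + 2⁻¹ ^ (σ.length + (ℓ (m + 1) - ℓ m)) <
      μ (P ∩ cyl σ) := by
    rw [hk]; exact (hstep m).trans_le (measure_le_of_mem_heavyNodes hσ hm hlen)
  obtain ⟨f, g, hfg, hf, hg⟩ := exists_two_le_measure_inter_cyl_append hμ (hθ (m + 1)) hmass
  have hlen' : ∀ f : Fin (ℓ (m + 1) - ℓ m) → Bool, (σ ++ List.ofFn f).length = ℓ (m + 1) :=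
    fun f => by rw [List.length_append, List.length_ofFn, hk]
  exact ⟨_, append_mem_heavyNodes hℓ hσ hm hlen (hlen' f) hf,
    _, append_mem_heavyNodes hℓ hσ hm hlen (hlen' g) hg, List.prefix_append _ _,
    List.prefix_append _ _, hlen' f, hlen' g,
    fun h => hfg (List.ofFn_injective (List.append_cancel_left h))⟩

end Heavy

section Tree

variable {H T T' : Set (List Bool)}

def prefixClosure (H : Set (List Bool)) : Set (List Bool) := {τ | ∃ σ ∈ H, τ <+: σ}

lemma subset_prefixClosure : H ⊆ prefixClosure H := fun σ hσ => ⟨σ, hσ, List.prefix_refl σ⟩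

lemma isTree_prefixClosure : IsTree (prefixClosure H) :=
  fun _ ⟨σ, hσ, hτσ⟩ _ hρτ => ⟨σ, hσ, hρτ.trans hτσ⟩

lemma pruned_prefixClosure (h : ∀ σ ∈ H, ∃ τ ∈ H, σ <+: τ ∧ σ.length < τ.length) :
    Pruned (prefixClosure H) := by
  rintro ρ ⟨σ, hσ, hρσ⟩
  obtain ⟨τ, hτ, hστ, hlt⟩ := h σ hσ
  refine ⟨τ, subset_prefixClosure hτ, hρσ.trans hστ, ?_⟩
  rintro rfl
  exact hlt.not_ge hρσ.length_le

lemma TwoExt.mono (hT : T ⊆ T') {σ : List Bool} {L : ℕ} (h : TwoExt T σ L) : TwoExt T' σ L :=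
  let ⟨τ₁, h₁, τ₂, h₂, hτ⟩ := h
  ⟨τ₁, hT h₁, τ₂, hT h₂, hτ⟩

end Tree

theorem exists_ellPerfect_tree_of_thresholds {μ : Measure (ℕ → Bool)} (hμ : IsFairCoin μ)
    {ℓ : ℕ → ℕ} (hℓ : StrictMono ℓ) {P : Set (ℕ → Bool)} (hP : IsClosed P) {θ : ℕ → ℝ≥0∞}
    (hθ : ∀ n, 0 < θ n)
    (hstep : ∀ n, 2 ^ (ℓ (n + 1) - ℓ n) * θ (n + 1) + 2⁻¹ ^ ℓ (n + 1) < θ n)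
    {N : ℕ} (hN : 2 ^ ℓ N * θ N < μ P) :
    ∃ T : Set (List Bool), T.Nonempty ∧ IsTree T ∧ Pruned T ∧ EllPerfect ℓ T ∧
      paths T ⊆ P := by
  set H := heavyNodes μ P ℓ θ N
  have hmem : ∀ τ ∈ prefixClosure H, ∀ n, N ≤ n → τ.length = ℓ n → τ ∈ H :=
    fun τ ⟨σ, hσ, hτσ⟩ n hn hlen => mem_heavyNodes_of_prefix hσ hτσ hn hlen
  obtain ⟨σ₀, hσ₀⟩ := exists_mem_heavyNodes hℓ hN
  refine ⟨prefixClosure H, ⟨σ₀, subset_prefixClosure hσ₀⟩, isTree_prefixClosure, ?_, ?_, ?_⟩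
  · refine pruned_prefixClosure fun σ hσ => ?_
    obtain ⟨m, hm, hlen⟩ := hσ.1
    obtain ⟨τ, hτ, -, -, hστ, -, hτlen, -⟩ := twoExt_heavyNodes hμ hℓ hθ hstep hσ hm hlen
    exact ⟨τ, hτ, hστ, by rw [hlen, hτlen]; exact hℓ m.lt_succ_self⟩
  · refine eventually_atTop.2 ⟨N, fun n hn σ hσ hlen => ?_⟩
    exact (twoExt_heavyNodes hμ hℓ hθ hstep (hmem σ hσ n hn hlen) hn hlen).mono
      subset_prefixClosure
  · intro x hx
    refine hP.mem_of_frequently_nonempty (hℓ.tendsto_atTop.frequently (Eventually.frequently ?_))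
    filter_upwards [eventually_ge_atTop N] with n hn
    refine nonempty_of_measure_ne_zero (μ := μ) ((hθ n).trans_le ?_).ne'
    exact measure_le_of_mem_heavyNodes (hmem _ (hx _) n hn (length_pre x _)) hn (length_pre x _)

/-- If `ℓ` is strictly increasing with `∑_n 2^{-(ℓ(n+1) - ℓ(n))} < ∞`
and `P` is closed with `μ(P) > 0`, then there is a nonempty pruned `ℓ`-perfect tree
`T` with `[T] ⊆ P`. -/
theorem stmt_15 (μ : MeasureTheory.Measure (ℕ → Bool)) (hμ : IsFairCoin μ)
    (ℓ : ℕ → ℕ) (hℓ : StrictMono ℓ)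
    (hsum : ∑' n : ℕ, (2 : ℝ≥0∞)⁻¹ ^ (ℓ (n + 1) - ℓ n) < ⊤)
    (P : Set (ℕ → Bool)) (hP : IsClosed P) (hpos : 0 < μ P) :
    ∃ T : Set (List Bool), T.Nonempty ∧ IsTree T ∧ Pruned T ∧ EllPerfect ℓ T ∧
      paths T ⊆ P := by
  obtain ⟨ε, hε, hεstep, hεP⟩ := exists_eq_add_succ_of_tsum_ne_top
    (d := fun n => 2 * 2⁻¹ ^ (ℓ (n + 1) - ℓ n))
    (by rw [ENNReal.tsum_mul_left]; exact ENNReal.mul_ne_top ENNReal.ofNat_ne_top hsum.ne) hpos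
  obtain ⟨N, hN⟩ := hεP.exists
  refine exists_ellPerfect_tree_of_thresholds (θ := fun n => ε n * 2⁻¹ ^ ℓ n) (N := N) hμ hℓ hP
    (fun n => ENNReal.mul_pos (hε n).1.ne' (by simp)) (fun n => ?_) ?_
  · have h := two_pow_mul_add_lt (hε (n + 1)).2 (ℓ n) (ℓ (n + 1) - ℓ n)
    rwa [Nat.add_sub_cancel' (hℓ n.lt_succ_self).le, ← hεstep n] at h
  · rwa [mul_left_comm, two_pow_mul_inv_two_pow, mul_one]
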